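/- arXiv:1509.08894 — 3 statements merged into one kernel-verified Lean document; each statement's English description precedes it below -/
import Mathlib

section
/- With the notation of the multi-group multi-patch vector-host model, if M_{vh} M_{hv} is irreducible then min_{j=1,…,n} L_j ≤ R_0²(n,m) ≤ max_{j=1,…,n} L_j, where R_0² = ρ(M_{vh} M_{hv}) and L_j = (β_{hv} β_{vh} / (μ_j + γ_j)) ∑_{k=1}^m a_k² p_{jk} N_{v,k} / ((∑_{l=1}^n p_{lk} N_{h,l}) (μ_v + δ_k)). -/
/-! With `w i = (μ i + γ i) * N_{h,i}` one has `M_{hv} w = (a_k β_{hv} N_{v,k})_k` and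
`(M_{vh} M_{hv} w)_i = w_i L_i`, so `diag(w)⁻¹ (M_{vh} M_{hv}) diag(w)` is a nonnegative matrix
with the same spectrum whose row sums are the `L_i`. For a nonnegative matrix the maximal row
sum is its `ℓ∞` operator norm, which bounds the spectral radius; if all row sums are at least
`c ≥ 0`, those of the `k`-th power are at least `c ^ k`, and Gelfand's formula gives `c ≤ ρ`. -/

noncomputable def specRad {ι : Type*} [Fintype ι] [DecidableEq ι] (A : Matrix ι ι ℝ) : ℝ :=
  sSup ((fun z : ℂ => ‖z‖) '' spectrum ℂ (A.map ((↑) : ℝ → ℂ)))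

def MatIrreducible {ι : Type*} [Fintype ι] [DecidableEq ι] (A : Matrix ι ι ℝ) : Prop :=
  ∀ i j : ι, ∃ k : ℕ, 0 < k ∧ 0 < (A ^ k) i j

open Filter Matrix

attribute [local instance] Matrix.linftyOpNormedAddCommGroup Matrix.linftyOpNormedRing
  Matrix.linftyOpNormedAlgebra

namespace Matrix

variable {m n α : Type*} [Fintype m] [Fintype n]

lemma linfty_opNorm_eq_iSup [NormedAddCommGroup α] (A : Matrix m n α) :
    ‖A‖ = ⨆ i, ∑ j, ‖A i j‖ := by
  rw [linfty_opNorm_def, Finset.sup_univ_eq_ciSup, NNReal.coe_iSup]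
  simp only [NNReal.coe_sum, coe_nnnorm]

lemma linfty_opNorm_map_ofReal (A : Matrix m n ℝ) : ‖A.map ((↑) : ℝ → ℂ)‖ = ‖A‖ := by
  simp only [linfty_opNorm_eq_iSup, map_apply, Complex.norm_real]

end Matrix

section SpectralRadius

variable {ι : Type*} [Fintype ι] [DecidableEq ι]

lemma specRad_le_linfty_opNorm [Nonempty ι] (A : Matrix ι ι ℝ) : specRad A ≤ ‖A‖ := by
  refine Real.sSup_le ?_ (norm_nonneg A)
  rintro _ ⟨z, hz, rfl⟩
  exact (spectrum.norm_le_norm_of_mem hz).trans (linfty_opNorm_map_ofReal A).le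

lemma ofReal_le_spectralRadius_of_pow_le_norm_pow {A : Type*} [NormedRing A] [NormedAlgebra ℂ A]
    [CompleteSpace A] {a : A} {c : ℝ} (hc : 0 ≤ c) (h : ∀ k : ℕ, c ^ k ≤ ‖a ^ k‖) :
    ENNReal.ofReal c ≤ spectralRadius ℂ a := by
  refine ge_of_tendsto (spectrum.pow_norm_pow_one_div_tendsto_nhds_spectralRadius a) ?_
  filter_upwards [eventually_ne_atTop 0] with k hk
  refine ENNReal.ofReal_le_ofReal ?_
  calc c = (c ^ k) ^ (1 / k : ℝ) := by
        rw [← Real.rpow_natCast, ← Real.rpow_mul hc, mul_one_div_cancel (by positivity),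
          Real.rpow_one]
    _ ≤ ‖a ^ k‖ ^ (1 / k : ℝ) := by gcongr; exact h k

lemma le_specRad_of_pow_le_linfty_opNorm_pow [Nonempty ι] (A : Matrix ι ι ℝ) {c : ℝ} (hc : 0 ≤ c)
    (h : ∀ k : ℕ, c ^ k ≤ ‖A ^ k‖) : c ≤ specRad A := by
  set Ac := A.map ((↑) : ℝ → ℂ)
  have hpow : ∀ k : ℕ, c ^ k ≤ ‖Ac ^ k‖ := fun k => by
    have hmap : (A ^ k).map ((↑) : ℝ → ℂ) = Ac ^ k := map_pow Complex.ofRealHom.mapMatrix A k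
    rw [← hmap, linfty_opNorm_map_ofReal]
    exact h k
  obtain ⟨z, hz, hzρ⟩ := spectrum.exists_nnnorm_eq_spectralRadius Ac
  have hcz : ENNReal.ofReal c ≤ ENNReal.ofReal ‖z‖ := by
    rw [ofReal_norm, enorm_eq_nnnorm, hzρ]
    exact ofReal_le_spectralRadius_of_pow_le_norm_pow hc hpow
  have hbdd : BddAbove ((fun z : ℂ => ‖z‖) '' spectrum ℂ Ac) :=
    ⟨‖Ac‖, by rintro _ ⟨w, hw, rfl⟩; exact spectrum.norm_le_norm_of_mem hw⟩
  exact ((ENNReal.ofReal_le_ofReal_iff (norm_nonneg z)).mp hcz).trans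
    (le_csSup hbdd ⟨z, hz, rfl⟩)

end SpectralRadius

section Nonneg

variable {ι : Type*} [Fintype ι] [DecidableEq ι] {A : Matrix ι ι ℝ}

lemma pow_le_sum_pow_apply (hA : ∀ i j, 0 ≤ A i j) {c : ℝ} (hc : 0 ≤ c)
    (h : ∀ i, c ≤ ∑ j, A i j) (k : ℕ) (i : ι) : c ^ k ≤ ∑ j, (A ^ k) i j := by
  induction k generalizing i with
  | zero => simp [one_apply]
  | succ k ih =>
    calc c ^ (k + 1) = c * c ^ k := pow_succ' c k
      _ ≤ (∑ l, A i l) * c ^ k := by gcongr; exact h i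
      _ = ∑ l, A i l * c ^ k := Finset.sum_mul _ _ _
      _ ≤ ∑ l, A i l * ∑ j, (A ^ k) l j := by gcongr with l; exacts [hA i l, ih l]
      _ = ∑ j, (A ^ (k + 1)) i j := by
        simp only [pow_succ', mul_apply, Finset.mul_sum]
        exact Finset.sum_comm

variable [Nonempty ι]

lemma iInf_sum_le_specRad_of_nonneg (hA : ∀ i j, 0 ≤ A i j) :
    ⨅ i, ∑ j, A i j ≤ specRad A := by
  have hc : 0 ≤ ⨅ i, ∑ j, A i j := le_ciInf fun i => Finset.sum_nonneg fun j _ => hA i j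
  refine le_specRad_of_pow_le_linfty_opNorm_pow A hc fun k => ?_
  obtain ⟨i⟩ := ‹Nonempty ι›
  calc (⨅ i, ∑ j, A i j) ^ k ≤ ∑ j, (A ^ k) i j :=
        pow_le_sum_pow_apply hA hc (fun i => ciInf_le (Finite.bddBelow_range _) i) k i
    _ ≤ ∑ j, ‖(A ^ k) i j‖ := Finset.sum_le_sum fun j _ => Real.le_norm_self _
    _ ≤ ‖A ^ k‖ := by
        rw [linfty_opNorm_eq_iSup]
        exact le_ciSup (f := fun i => ∑ j, ‖(A ^ k) i j‖) (Finite.bddAbove_range _) i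

lemma specRad_le_iSup_sum_of_nonneg (hA : ∀ i j, 0 ≤ A i j) :
    specRad A ≤ ⨆ i, ∑ j, A i j := by
  refine (specRad_le_linfty_opNorm A).trans_eq ?_
  simp only [linfty_opNorm_eq_iSup, Real.norm_of_nonneg (hA _ _)]

end Nonneg

section Similarity

variable {ι : Type*} [Fintype ι] [DecidableEq ι]

lemma specRad_inv_mul_mul (A P : Matrix ι ι ℝ) (hP : IsUnit P) :
    specRad (P⁻¹ * A * P) = specRad A := by
  set u := Units.map (Complex.ofRealHom.mapMatrix (m := ι)).toMonoidHom hP.unit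
  have key : (P⁻¹ * A * P).map ((↑) : ℝ → ℂ) =
      (↑u⁻¹ : Matrix ι ι ℂ) * A.map (↑) * (↑u : Matrix ι ι ℂ) := by
    have hinv : ((hP.unit⁻¹ : (Matrix ι ι ℝ)ˣ) : Matrix ι ι ℝ) = P⁻¹ := by
      rw [coe_units_inv, IsUnit.unit_spec]
    simp only [u, Units.coe_map_inv, Units.coe_map, hinv, IsUnit.unit_spec]
    change Complex.ofRealHom.mapMatrix (P⁻¹ * A * P) = _
    rw [map_mul, map_mul]
    rfl
  unfold specRad
  rw [key, spectrum.units_conjugate']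

variable {w : ι → ℝ}

lemma specRad_diagonal_inv_mul_mul_diagonal (A : Matrix ι ι ℝ) (hw : ∀ i, w i ≠ 0) :
    specRad (diagonal w⁻¹ * A * diagonal w) = specRad A := by
  have hinv : (diagonal w)⁻¹ = diagonal w⁻¹ := inv_eq_left_inv <| by
    rw [diagonal_mul_diagonal, ← diagonal_one]
    exact congrArg diagonal (funext fun i => inv_mul_cancel₀ (hw i))
  rw [← hinv]
  exact specRad_inv_mul_mul A _ (isUnit_diagonal.mpr (Pi.isUnit_iff.mpr fun i => (hw i).isUnit))

lemma sum_diagonal_inv_mul_mul_diagonal_apply (A : Matrix ι ι ℝ) (i : ι) :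
    ∑ j, (diagonal w⁻¹ * A * diagonal w) i j = (A *ᵥ w) i / w i := by
  simp only [mul_diagonal, diagonal_mul, mulVec, dotProduct, Finset.sum_div, Pi.inv_apply]
  exact Finset.sum_congr rfl fun j _ => by ring

end Similarity

section CollatzWielandt

variable {ι : Type*} [Fintype ι] [DecidableEq ι] {A : Matrix ι ι ℝ} {w : ι → ℝ}

lemma diagonal_inv_mul_mul_diagonal_nonneg (hA : ∀ i j, 0 ≤ A i j) (hw : ∀ i, 0 < w i)
    (i j : ι) : 0 ≤ (diagonal w⁻¹ * A * diagonal w) i j := by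
  simp only [mul_diagonal, diagonal_mul, Pi.inv_apply]
  exact mul_nonneg (mul_nonneg (inv_nonneg.2 (hw i).le) (hA i j)) (hw j).le

variable [Nonempty ι]

lemma iInf_mulVec_div_le_specRad (hA : ∀ i j, 0 ≤ A i j) (hw : ∀ i, 0 < w i) :
    ⨅ i, (A *ᵥ w) i / w i ≤ specRad A := by
  simpa only [sum_diagonal_inv_mul_mul_diagonal_apply,
    specRad_diagonal_inv_mul_mul_diagonal A fun i => (hw i).ne'] using
    iInf_sum_le_specRad_of_nonneg (diagonal_inv_mul_mul_diagonal_nonneg hA hw)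

lemma specRad_le_iSup_mulVec_div (hA : ∀ i j, 0 ≤ A i j) (hw : ∀ i, 0 < w i) :
    specRad A ≤ ⨆ i, (A *ᵥ w) i / w i := by
  simpa only [sum_diagonal_inv_mul_mul_diagonal_apply,
    specRad_diagonal_inv_mul_mul_diagonal A fun i => (hw i).ne'] using
    specRad_le_iSup_sum_of_nonneg (diagonal_inv_mul_mul_diagonal_nonneg hA hw)

end CollatzWielandt

section VectorHost

variable {ι κ : Type*} [Fintype ι] {βvh βhv μv : ℝ} {a Nv δ : κ → ℝ}
  {Nh μ γ : ι → ℝ} {p : ι → κ → ℝ}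

lemma mulVec_hostWeights {Mhv : Matrix κ ι ℝ}
    (hMhv : ∀ j i, Mhv j i = a j * βhv * p i j * Nv j / ((μ i + γ i) * ∑ l, p l j * Nh l))
    (hμγ : ∀ i, μ i + γ i ≠ 0) (hS : ∀ j, ∑ l, p l j * Nh l ≠ 0) :
    Mhv *ᵥ (fun i => (μ i + γ i) * Nh i) = fun j => a j * βhv * Nv j := by
  ext j
  calc ∑ i, Mhv j i * ((μ i + γ i) * Nh i)
      = a j * βhv * Nv j / (∑ l, p l j * Nh l) * ∑ i, p i j * Nh i := by
        rw [Finset.mul_sum]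
        refine Finset.sum_congr rfl fun i _ => ?_
        rw [hMhv]
        field_simp [hμγ i]
    _ = a j * βhv * Nv j := div_mul_cancel₀ _ (hS j)

lemma mulVec_vectorWeights [Fintype κ] {Mvh : Matrix ι κ ℝ}
    (hMvh : ∀ i j, Mvh i j = a j * βvh * p i j * Nh i / ((μv + δ j) * ∑ l, p l j * Nh l)) :
    Mvh *ᵥ (fun j => a j * βhv * Nv j) = fun i => βhv * βvh * Nh i *
      ∑ k, a k ^ 2 * p i k * Nv k / ((∑ l, p l k * Nh l) * (μv + δ k)) := by
  ext i
  simp only [mulVec, dotProduct, hMvh]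
  rw [Finset.mul_sum]
  exact Finset.sum_congr rfl fun k _ => by ring

end VectorHost

theorem stmt6_general {n m : ℕ} [NeZero n] (βvh βhv μv : ℝ) (a Nv δ : Fin m → ℝ)
    (Nh μ γ : Fin n → ℝ) (p : Fin n → Fin m → ℝ)
    (hβvh : 0 < βvh) (hβhv : 0 < βhv) (hμv : 0 < μv)
    (ha : ∀ j, 0 < a j) (hNv : ∀ j, 0 < Nv j) (hδ : ∀ j, 0 < δ j)
    (hNh : ∀ i, 0 < Nh i) (hμ : ∀ i, 0 < μ i) (hγ : ∀ i, 0 < γ i)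
    (hp : ∀ i j, 0 ≤ p i j)
    (hS : ∀ j, 0 < ∑ l, p l j * Nh l)
    (Mhv : Matrix (Fin m) (Fin n) ℝ)
    (Mvh : Matrix (Fin n) (Fin m) ℝ)
    (hMhv : ∀ j i, Mhv j i = a j * βhv * p i j * Nv j / ((μ i + γ i) * ∑ l, p l j * Nh l))
    (hMvh : ∀ i j, Mvh i j = a j * βvh * p i j * Nh i / ((μv + δ j) * ∑ l, p l j * Nh l)) :
    (⨅ j : Fin n, (βhv * βvh / (μ j + γ j)) *
        ∑ k, a k ^ 2 * p j k * Nv k / ((∑ l, p l k * Nh l) * (μv + δ k)))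
      ≤ specRad (Mvh * Mhv) ∧
    specRad (Mvh * Mhv) ≤
      ⨆ j : Fin n, (βhv * βvh / (μ j + γ j)) *
        ∑ k, a k ^ 2 * p j k * Nv k / ((∑ l, p l k * Nh l) * (μv + δ k)) := by
  have hμγ : ∀ i, 0 < μ i + γ i := fun i => add_pos (hμ i) (hγ i)
  have hw : ∀ i, 0 < (μ i + γ i) * Nh i := fun i => mul_pos (hμγ i) (hNh i)
  have hMvh0 : ∀ i k, 0 ≤ Mvh i k := fun i k => by
    have := ha k; have := hδ k; have := hS k; have := hp i k; have := hNh i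
    rw [hMvh]; positivity
  have hMhv0 : ∀ k j, 0 ≤ Mhv k j := fun k j => by
    have := ha k; have := hNv k; have := hS k; have := hp j k; have := hμγ j
    rw [hMhv]; positivity
  have hB : ∀ i j, 0 ≤ (Mvh * Mhv) i j := fun i j => by
    rw [mul_apply]; exact Finset.sum_nonneg fun k _ => mul_nonneg (hMvh0 i k) (hMhv0 k j)
  have hL : ∀ i, ((Mvh * Mhv) *ᵥ fun i => (μ i + γ i) * Nh i) i / ((μ i + γ i) * Nh i) =
      (βhv * βvh / (μ i + γ i)) *
        ∑ k, a k ^ 2 * p i k * Nv k / ((∑ l, p l k * Nh l) * (μv + δ k)) := fun i => by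
    rw [← mulVec_mulVec, mulVec_hostWeights hMhv (fun i => (hμγ i).ne') (fun j => (hS j).ne'),
      mulVec_vectorWeights hMvh]
    field_simp [(hμγ i).ne', (hNh i).ne']
  exact ⟨(iInf_congr hL).symm.trans_le (iInf_mulVec_div_le_specRad hB hw),
    (specRad_le_iSup_mulVec_div hB hw).trans_eq (iSup_congr hL)⟩

theorem stmt6 {n m : ℕ} [NeZero n] (βvh βhv μv : ℝ) (a Nv δ : Fin m → ℝ)
    (Nh μ γ : Fin n → ℝ) (p : Fin n → Fin m → ℝ)
    (hβvh : 0 < βvh) (hβhv : 0 < βhv) (hμv : 0 < μv)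
    (ha : ∀ j, 0 < a j) (hNv : ∀ j, 0 < Nv j) (hδ : ∀ j, 0 < δ j)
    (hNh : ∀ i, 0 < Nh i) (hμ : ∀ i, 0 < μ i) (hγ : ∀ i, 0 < γ i)
    (hp : ∀ i j, 0 ≤ p i j) (hrow : ∀ i, ∑ j, p i j = 1)
    (hS : ∀ j, 0 < ∑ l, p l j * Nh l)
    (Mhv : Matrix (Fin m) (Fin n) ℝ)
    (Mvh : Matrix (Fin n) (Fin m) ℝ)
    (hMhv : ∀ j i, Mhv j i = a j * βhv * p i j * Nv j / ((μ i + γ i) * ∑ l, p l j * Nh l))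
    (hMvh : ∀ i j, Mvh i j = a j * βvh * p i j * Nh i / ((μv + δ j) * ∑ l, p l j * Nh l))
    (hirr : MatIrreducible (Mvh * Mhv)) :
    (⨅ j : Fin n, (βhv * βvh / (μ j + γ j)) *
        ∑ k, a k ^ 2 * p j k * Nv k / ((∑ l, p l k * Nh l) * (μv + δ k)))
      ≤ specRad (Mvh * Mhv) ∧
    specRad (Mvh * Mhv) ≤
      ⨆ j : Fin n, (βhv * βvh / (μ j + γ j)) *
        ∑ k, a k ^ 2 * p j k * Nv k / ((∑ l, p l k * Nh l) * (μv + δ k)) :=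
  stmt6_general βvh βhv μv a Nv δ Nh μ γ p hβvh hβhv hμv ha hNv hδ hNh hμ hγ hp hS Mhv Mvh hMhv hMvh
end

section
/- If the residence-time matrix P has rank one, i.e. all rows of P equal (p_1,…,p_m), so that p_{ik} = p_k for all groups i (with ∑_k p_k = 1, p_k ≥ 0), then M_{vh}M_{hv} has rank one and the basic reproduction number satisfies R_0²(m,n) = ρ(M_{vh}M_{hv}) = tr(M_{vh}M_{hv}) = ∑_{i=1}^n (β_{vh} β_{hv} N_{h,i}/(μ_i+γ_i)) ∑_{k=1}^m a_k² p_k² N_{v,k} / ((p_k ∑_{l=1}^n N_{h,l})² (μ_v+δ_k)). -/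
theorem stmt7 {n m : ℕ} (βvh βhv μv : ℝ) (a Nv δ : Fin m → ℝ)
    (Nh μ γ : Fin n → ℝ) (p : Fin n → Fin m → ℝ)
    (hβvh : 0 < βvh) (hβhv : 0 < βhv) (hμv : 0 < μv)
    (ha : ∀ j, 0 < a j) (hNv : ∀ j, 0 < Nv j) (hδ : ∀ j, 0 < δ j)
    (hNh : ∀ i, 0 < Nh i) (hμ : ∀ i, 0 < μ i) (hγ : ∀ i, 0 < γ i)
    (hp : ∀ i j, 0 ≤ p i j) (hrow : ∀ i, ∑ j, p i j = 1)
    (hS : ∀ j, 0 < ∑ l, p l j * Nh l)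
    (Mhv : Matrix (Fin m) (Fin n) ℝ)
    (Mvh : Matrix (Fin n) (Fin m) ℝ)
    (hMhv : ∀ j i, Mhv j i = a j * βhv * p i j * Nv j / ((μ i + γ i) * ∑ l, p l j * Nh l))
    (hMvh : ∀ i j, Mvh i j = a j * βvh * p i j * Nh i / ((μv + δ j) * ∑ l, p l j * Nh l))
    (q : Fin m → ℝ) (hq : ∀ k, 0 < q k) (hqsum : ∑ k, q k = 1)
    (hP : ∀ i k, p i k = q k) :
    (Mvh * Mhv).rank = 1 ∧
    specRad (Mvh * Mhv) = (Mvh * Mhv).trace ∧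
    specRad (Mvh * Mhv) =
      ∑ i, (βvh * βhv * Nh i / (μ i + γ i)) *
        ∑ k, a k ^ 2 * q k ^ 2 * Nv k /
          ((q k * ∑ l, Nh l) ^ 2 * (μv + δ k)) := by
  -- m > 0
  have hm : 0 < m := by
    rcases Nat.eq_zero_or_pos m with h | h
    · subst h; simp at hqsum
    · exact h
  have hn : 0 < n := by
    rcases Nat.eq_zero_or_pos n with h | h
    · subst h; have := hS ⟨0, hm⟩; simp at this
    · exact h
  have i0 : Fin n := ⟨0, hn⟩
  haveI : Nonempty (Fin n) := ⟨i0⟩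
  haveI : Nonempty (Fin m) := ⟨⟨0, hm⟩⟩
  set S : ℝ := ∑ l, Nh l with hSdef
  have hSpos : 0 < S := Finset.sum_pos (fun i _ => hNh i) Finset.univ_nonempty
  have hcol : ∀ j, (∑ l, p l j * Nh l) = q j * S := by
    intro j
    simp only [hP, hSdef, Finset.mul_sum]
  have hqS : ∀ j, 0 < q j * S := fun j => mul_pos (hq j) hSpos
  set c : ℝ := ∑ k, a k ^ 2 * q k ^ 2 * Nv k / ((q k * S) ^ 2 * (μv + δ k)) with hcdef
  have hcpos : 0 < c := by
    apply Finset.sum_pos (fun k _ => ?_) Finset.univ_nonempty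
    apply div_pos
    · exact mul_pos (mul_pos (pow_pos (ha k) 2) (pow_pos (hq k) 2)) (hNv k)
    · exact mul_pos (pow_pos (hqS k) 2) (by linarith [hδ k])
  set u : Fin n → ℝ := fun i => Nh i with hudef
  set x : Fin n → ℝ := fun i => βvh * βhv * c / (μ i + γ i) with hxdef
  have hupos : ∀ i, 0 < u i := fun i => hNh i
  have hxpos : ∀ i, 0 < x i := fun i => by
    apply div_pos (by positivity) (by linarith [hμ i, hγ i])
  have hμγ : ∀ i, (0:ℝ) < μ i + γ i := fun i => by linarith [hμ i, hγ i]
  have hμδ : ∀ j, (0:ℝ) < μv + δ j := fun j => by linarith [hδ j]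
  set M : Matrix (Fin n) (Fin n) ℝ := Mvh * Mhv with hMdef
  have hM : ∀ i i', M i i' = u i * x i' := by
    intro i i'
    rw [hMdef, Matrix.mul_apply]
    have key : ∀ j : Fin m, Mvh i j * Mhv j i' = Nh i * (βvh * βhv *
        (a j ^ 2 * q j ^ 2 * Nv j / ((q j * S) ^ 2 * (μv + δ j))) / (μ i' + γ i')) := by
      intro j
      rw [hMvh, hMhv, hcol, hP, hP]
      have h1 := (hμγ i').ne'
      have h2 := (hμδ j).ne'
      have h3 := (hqS j).ne'
      field_simp
    rw [Finset.sum_congr rfl (fun j _ => key j), ← Finset.mul_sum, ← Finset.sum_div,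
      ← Finset.mul_sum]
  set t : ℝ := ∑ i, x i * u i with htdef
  have htpos : 0 < t :=
    Finset.sum_pos (fun i _ => mul_pos (hxpos i) (hupos i)) Finset.univ_nonempty
  have htrace : M.trace = t := by
    rw [Matrix.trace, htdef]
    apply Finset.sum_congr rfl
    intro i _
    rw [Matrix.diag_apply, hM i i]; ring
  -- the stated sum equals t
  have htarget :
      (∑ i, (βvh * βhv * Nh i / (μ i + γ i)) *
        ∑ k, a k ^ 2 * q k ^ 2 * Nv k /
          ((q k * ∑ l, Nh l) ^ 2 * (μv + δ k))) = t := by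
    rw [htdef]
    apply Finset.sum_congr rfl
    intro i _
    rw [hxdef, hudef, ← hSdef, ← hcdef]
    have h1 := (hμγ i).ne'
    field_simp
  -- rank one
  have hmv : ∀ v : Fin n → ℝ, M.mulVec v = (∑ j, x j * v j) • u := by
    intro v
    funext i
    rw [Matrix.mulVec, dotProduct]
    simp only [Pi.smul_apply, smul_eq_mul, Finset.sum_mul]
    apply Finset.sum_congr rfl
    intro j _
    rw [hM i j]; ring
  have hune : u ≠ 0 := by
    intro h
    have := congrFun h i0
    exact (hupos i0).ne' this
  have hrange : LinearMap.range M.mulVecLin = Submodule.span ℝ {u} := by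
    apply le_antisymm
    · rintro y ⟨v, rfl⟩
      rw [Matrix.mulVecLin_apply, hmv]
      exact Submodule.smul_mem _ _ (Submodule.mem_span_singleton_self u)
    · rw [Submodule.span_le, Set.singleton_subset_iff]
      refine ⟨fun j => if j = i0 then (x i0)⁻¹ else 0, ?_⟩
      rw [Matrix.mulVecLin_apply, hmv]
      rw [Finset.sum_eq_single i0]
      · simp [mul_inv_cancel₀ (hxpos i0).ne']
      · intro b _ hb; simp [hb]
      · simp
  have hrank : M.rank = 1 := by
    rw [Matrix.rank, hrange, finrank_span_singleton hune]
  -- M * M = t • M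
  have hM2 : M * M = t • M := by
    ext i i'
    rw [Matrix.mul_apply, Matrix.smul_apply, smul_eq_mul, hM i i', htdef,
      Finset.sum_mul]
    apply Finset.sum_congr rfl
    intro k _
    rw [hM i k, hM k i']; ring
  -- complexification
  set A : Matrix (Fin n) (Fin n) ℂ := M.map ((↑) : ℝ → ℂ) with hAdef
  have hA2 : A * A = (t : ℂ) • A := by
    ext i i'
    rw [hAdef, Matrix.mul_apply]
    simp only [Matrix.map_apply, Matrix.smul_apply, smul_eq_mul]
    have : ∑ k, (M i k : ℂ) * (M k i') = ((∑ k, M i k * M k i' : ℝ) : ℂ) := by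
      push_cast; rfl
    rw [this, ← Matrix.mul_apply, hM2, Matrix.smul_apply, smul_eq_mul]
    push_cast; rfl
  have haeval : Polynomial.aeval A (Polynomial.X ^ 2 - Polynomial.C (t:ℂ) * Polynomial.X) = 0 := by
    simp only [map_sub, map_mul, Polynomial.aeval_X_pow, Polynomial.aeval_C,
      Polynomial.aeval_X]
    rw [pow_two, hA2, Algebra.smul_def]
    simp
  have hspec_sub : spectrum ℂ A ⊆ {0, (t:ℂ)} := by
    intro z hz
    have hmem := spectrum.subset_polynomial_aeval A
      (Polynomial.X ^ 2 - Polynomial.C (t:ℂ) * Polynomial.X) ⟨z, hz, rfl⟩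
    rw [haeval, spectrum.zero_eq] at hmem
    simp only [Set.mem_singleton_iff, Polynomial.eval_sub, Polynomial.eval_mul,
      Polynomial.eval_pow, Polynomial.eval_C, Polynomial.eval_X] at hmem
    have hfac : z * (z - (t:ℂ)) = 0 := by linear_combination hmem
    rcases mul_eq_zero.mp hfac with h | h
    · left; exact h
    · right; exact sub_eq_zero.mp h
  -- t is in the spectrum
  set u' : Fin n → ℂ := fun i => (u i : ℂ) with hu'def
  have hu'ne : u' ≠ 0 := by
    intro h
    have := congrFun h i0
    simp only [hu'def, Pi.zero_apply, Complex.ofReal_eq_zero] at this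
    exact (hupos i0).ne' this
  have hAu : A.mulVec u' = (t : ℂ) • u' := by
    funext i
    rw [Matrix.mulVec, dotProduct]
    simp only [hAdef, Matrix.map_apply, hu'def, Pi.smul_apply, smul_eq_mul]
    have : ∑ j, (M i j : ℂ) * (u j : ℂ) = ((∑ j, M i j * u j : ℝ) : ℂ) := by
      push_cast; rfl
    rw [this]
    have h2 : (∑ j, M i j * u j) = t * u i := by
      simp only [hM]
      rw [htdef, Finset.sum_mul]
      apply Finset.sum_congr rfl
      intro j _; ring
    rw [h2]; push_cast; rfl
  have htmem : (t : ℂ) ∈ spectrum ℂ A := by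
    rw [spectrum.mem_iff]
    intro hunit
    have hB : (algebraMap ℂ (Matrix (Fin n) (Fin n) ℂ) (t:ℂ) - A).mulVec u' = 0 := by
      rw [Matrix.sub_mulVec, hAu]
      have : (algebraMap ℂ (Matrix (Fin n) (Fin n) ℂ) (t:ℂ)).mulVec u' = (t:ℂ) • u' := by
        rw [Algebra.algebraMap_eq_smul_one, Matrix.smul_mulVec, Matrix.one_mulVec]
      rw [this, sub_self]
    apply hu'ne
    have h1 : ((hunit.unit⁻¹ : (Matrix (Fin n) (Fin n) ℂ)ˣ) : Matrix (Fin n) (Fin n) ℂ) *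
        (algebraMap ℂ (Matrix (Fin n) (Fin n) ℂ) (t:ℂ) - A) = 1 := hunit.val_inv_mul
    have h2 : ((hunit.unit⁻¹ : (Matrix (Fin n) (Fin n) ℂ)ˣ) : Matrix (Fin n) (Fin n) ℂ).mulVec
        ((algebraMap ℂ (Matrix (Fin n) (Fin n) ℂ) (t:ℂ) - A).mulVec u') = u' := by
      rw [Matrix.mulVec_mulVec, h1, Matrix.one_mulVec]
    rw [hB, Matrix.mulVec_zero] at h2
    exact h2.symm
  have hgreat : IsGreatest ((fun z : ℂ => ‖z‖) '' spectrum ℂ A) t := by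
    constructor
    · refine ⟨(t:ℂ), htmem, ?_⟩
      exact Complex.norm_of_nonneg htpos.le
    · rintro y ⟨z, hz, rfl⟩
      rcases hspec_sub hz with h | h
      · rw [h]; show ‖(0:ℂ)‖ ≤ t; rw [norm_zero]; exact htpos.le
      · rw [Set.mem_singleton_iff] at h
        rw [h]; exact (Complex.norm_of_nonneg htpos.le).le
  have hsr : specRad M = t := by
    rw [specRad, ← hAdef]
    exact hgreat.csSup_eq
  refine ⟨hrank, ?_, ?_⟩
  · rw [hsr]; exact htrace.symm
  · rw [hsr]; exact htarget.symm
end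

section
/- If the 2×2 residence-time matrix is P = [[0,1],[1,0]] (group 1 spends all time in patch 2 and group 2 all time in patch 1), then the 2×2 matrix M_{vh} M_{hv} is diagonal (its off-diagonal entries vanish), hence M_{vh} M_{hv} is not irreducible even though P is irreducible. -/
/-! With `P` the swap matrix, every host group lives in the other group's patch, so the
diagonal entries of both `M_hv` and `M_vh` carry a factor `p i i = 0`. A product of two
`2 × 2` matrices with zero diagonal is diagonal, and powers of a diagonal matrix never reach
an off-diagonal entry. -/

namespace Matrix

theorem IsDiag.pow {n α : Type*} [Fintype n] [DecidableEq n] [Semiring α] {A : Matrix n n α}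
    (hA : A.IsDiag) (k : ℕ) : (A ^ k).IsDiag := by
  rw [← hA.diagonal_diag, diagonal_pow]
  exact isDiag_diagonal _

theorem isDiag_mul_of_diag_eq_zero_fin_two {α : Type*} [NonUnitalNonAssocSemiring α]
    {A B : Matrix (Fin 2) (Fin 2) α} (hA : ∀ i, A i i = 0) (hB : ∀ i, B i i = 0) :
    (A * B).IsDiag := by
  intro i j hij
  fin_cases i <;> fin_cases j <;> simp_all [mul_apply, Fin.sum_univ_two]

end Matrix

theorem not_matIrreducible_of_isDiag {ι : Type*} [Fintype ι] [DecidableEq ι]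
    {A : Matrix ι ι ℝ} (hA : A.IsDiag) {i j : ι} (hij : i ≠ j) : ¬ MatIrreducible A := by
  intro hirr
  obtain ⟨k, -, hpos⟩ := hirr i j
  exact hpos.ne' (hA.pow k hij)

theorem stmt9_general {a : Fin 2 → ℝ} {βvh βhv μv : ℝ} {Nv δ : Fin 2 → ℝ}
    {Nh μ γ : Fin 2 → ℝ}
    (p : Fin 2 → Fin 2 → ℝ)
    (Mhv Mvh : Matrix (Fin 2) (Fin 2) ℝ)
    (hMhv : ∀ j i, Mhv j i = a j * βhv * p i j * Nv j /
        ((μ i + γ i) * (p 0 j * Nh 0 + p 1 j * Nh 1)))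
    (hMvh : ∀ i j, Mvh i j = a j * βvh * p i j * Nh i /
        ((μv + δ j) * (p 0 j * Nh 0 + p 1 j * Nh 1)))
    (hP : p = ![![0, 1], ![1, 0]]) :
    (Mvh * Mhv) 0 1 = 0 ∧ (Mvh * Mhv) 1 0 = 0 ∧
      ¬ MatIrreducible (Mvh * Mhv) := by
  have hp : ∀ i, p i i = 0 := by
    subst hP
    intro i
    fin_cases i <;> rfl
  have hdiag : (Mvh * Mhv).IsDiag :=
    Matrix.isDiag_mul_of_diag_eq_zero_fin_two (fun i => by simp [hMvh, hp])
      (fun i => by simp [hMhv, hp])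
  exact ⟨hdiag zero_ne_one, hdiag one_ne_zero, not_matIrreducible_of_isDiag hdiag zero_ne_one⟩

theorem stmt9 {a : Fin 2 → ℝ} {βvh βhv μv : ℝ} {Nv δ : Fin 2 → ℝ}
    {Nh μ γ : Fin 2 → ℝ}
    (hβvh : 0 < βvh) (hβhv : 0 < βhv) (hμv : 0 < μv)
    (ha : ∀ j, 0 < a j) (hNv : ∀ j, 0 < Nv j) (hδ : ∀ j, 0 < δ j)
    (hNh : ∀ i, 0 < Nh i) (hμ : ∀ i, 0 < μ i) (hγ : ∀ i, 0 < γ i)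
    (p : Fin 2 → Fin 2 → ℝ)
    (Mhv Mvh : Matrix (Fin 2) (Fin 2) ℝ)
    (hMhv : ∀ j i, Mhv j i = a j * βhv * p i j * Nv j /
        ((μ i + γ i) * (p 0 j * Nh 0 + p 1 j * Nh 1)))
    (hMvh : ∀ i j, Mvh i j = a j * βvh * p i j * Nh i /
        ((μv + δ j) * (p 0 j * Nh 0 + p 1 j * Nh 1)))
    (hP : p = ![![0, 1], ![1, 0]]) :
    (Mvh * Mhv) 0 1 = 0 ∧ (Mvh * Mhv) 1 0 = 0 ∧
      ¬ MatIrreducible (Mvh * Mhv) :=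
  stmt9_general p Mhv Mvh hMhv hMvh hP
end
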